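/- arXiv:2002.05217 — 3 statements merged into one kernel-verified Lean document; each statement's English description precedes it below -/
import Mathlib

section
/- For p, q ∈ (0,1), the function L(w₁,w₂) = q·(p + (1-p)·(1-w₁)²) + (1-q)·((1-p)·(1-w₁-w₂)² + p·(1-w₂)²) has a global minimizer whose first coordinate satisfies w₁ = q/(p + q - p·q). -/
/-!
`L` is a quadratic whose Hessian is a nonnegative combination of squares of linear forms when
`p, q ∈ [0, 1]`. Its gradient vanishes at `(q / D, p / D)` with `D = p + q - p q`, so there the
second-order Taylor expansion is exact and `L v - L w` is a nonnegative sum of squares.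
-/

def rewardLoss (p q : ℝ) (w : ℝ × ℝ) : ℝ :=
  q * (p + (1 - p) * (1 - w.1) ^ 2) +
    (1 - q) * ((1 - p) * (1 - w.1 - w.2) ^ 2 + p * (1 - w.2) ^ 2)

/-- The two partial derivatives of `rewardLoss p q`, up to the factor `-2`, vanish at `w`. -/
def IsStationaryRewardLoss (p q : ℝ) (w : ℝ × ℝ) : Prop :=
  q * (1 - p) * (1 - w.1) + (1 - q) * (1 - p) * (1 - w.1 - w.2) = 0 ∧
    (1 - q) * (1 - p) * (1 - w.1 - w.2) + (1 - q) * p * (1 - w.2) = 0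

theorem rewardLoss_sub_eq_of_isStationary {p q : ℝ} {w : ℝ × ℝ}
    (hw : IsStationaryRewardLoss p q w) (v : ℝ × ℝ) :
    rewardLoss p q v - rewardLoss p q w =
      q * (1 - p) * (v.1 - w.1) ^ 2 + (1 - q) * (1 - p) * (v.1 + v.2 - w.1 - w.2) ^ 2 +
        (1 - q) * p * (v.2 - w.2) ^ 2 := by
  unfold rewardLoss
  linear_combination (-2 * (v.1 - w.1)) * hw.1 + (-2 * (v.2 - w.2)) * hw.2

theorem rewardLoss_le_of_isStationary {p q : ℝ} (hp : p ∈ Set.Icc (0 : ℝ) 1)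
    (hq : q ∈ Set.Icc (0 : ℝ) 1) {w : ℝ × ℝ} (hw : IsStationaryRewardLoss p q w) (v : ℝ × ℝ) :
    rewardLoss p q w ≤ rewardLoss p q v := by
  obtain ⟨hp0, hp1⟩ := hp
  obtain ⟨hq0, hq1⟩ := hq
  rw [← sub_nonneg, rewardLoss_sub_eq_of_isStationary hw]
  have hp' : 0 ≤ 1 - p := sub_nonneg.2 hp1
  have hq' : 0 ≤ 1 - q := sub_nonneg.2 hq1
  positivity

theorem isStationaryRewardLoss_div {p q : ℝ} (hD : p + q - p * q ≠ 0) :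
    IsStationaryRewardLoss p q (q / (p + q - p * q), p / (p + q - p * q)) := by
  generalize hE : p + q - p * q = D at hD ⊢
  constructor <;> field_simp
  · linear_combination (p - 1) * hE
  · linear_combination (q - 1) * hE

theorem stmt_4 (p q : ℝ) (hp : p ∈ Set.Ioo (0:ℝ) 1) (hq : q ∈ Set.Ioo (0:ℝ) 1) :
    ∃ w : ℝ × ℝ,
      (∀ v : ℝ × ℝ,
        q * (p + (1 - p) * (1 - w.1)^2) +
          (1 - q) * ((1 - p) * (1 - w.1 - w.2)^2 + p * (1 - w.2)^2) ≤
        q * (p + (1 - p) * (1 - v.1)^2) +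
          (1 - q) * ((1 - p) * (1 - v.1 - v.2)^2 + p * (1 - v.2)^2)) ∧
      w.1 = q / (p + q - p * q) := by
  have hD : 0 < p + q - p * q := by nlinarith [hp.1, hp.2, hq.1, hq.2]
  exact ⟨_, rewardLoss_le_of_isStationary (Set.Ioo_subset_Icc_self hp)
    (Set.Ioo_subset_Icc_self hq) (isStationaryRewardLoss_div hD.ne'), rfl⟩
end

section
/- For p ∈ (0,1) and q ∈ (0,1), the minimum over (w₁,w₂) ∈ ℝ² of L(w₁,w₂) = q·(p + (1-p)(1-w₁)²) + (1-q)·((1-p)(1-w₁-w₂)² + p(1-w₂)²) is strictly positive, while at q = 0 the minimum is 0. -/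
theorem stmt_10 (p : ℝ) (hp : p ∈ Set.Ioo (0:ℝ) 1) :
    (∀ q ∈ Set.Ioo (0:ℝ) 1,
      0 < sInf ((fun w : ℝ × ℝ =>
        q * (p + (1 - p) * (1 - w.1)^2) +
          (1 - q) * ((1 - p) * (1 - w.1 - w.2)^2 + p * (1 - w.2)^2)) '' Set.univ)) ∧
    sInf ((fun w : ℝ × ℝ =>
        (0:ℝ) * (p + (1 - p) * (1 - w.1)^2) +
          (1 - 0) * ((1 - p) * (1 - w.1 - w.2)^2 + p * (1 - w.2)^2)) '' Set.univ) = 0 := by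
  obtain ⟨hp0, hp1⟩ := hp
  constructor
  · rintro q ⟨hq0, hq1⟩
    have hne : ((fun w : ℝ × ℝ =>
        q * (p + (1 - p) * (1 - w.1)^2) +
          (1 - q) * ((1 - p) * (1 - w.1 - w.2)^2 + p * (1 - w.2)^2)) '' Set.univ).Nonempty :=
      ⟨_, ⟨((0:ℝ), (1:ℝ)), Set.mem_univ _, rfl⟩⟩
    have hb : q * p ≤ sInf ((fun w : ℝ × ℝ =>
        q * (p + (1 - p) * (1 - w.1)^2) +
          (1 - q) * ((1 - p) * (1 - w.1 - w.2)^2 + p * (1 - w.2)^2)) '' Set.univ) := by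
      apply le_csInf hne
      rintro x ⟨w, -, rfl⟩
      dsimp only
      nlinarith [sq_nonneg (1 - w.1), sq_nonneg (1 - w.1 - w.2), sq_nonneg (1 - w.2),
        mul_nonneg (mul_nonneg (le_of_lt hq0) (by linarith : (0:ℝ) ≤ 1 - p)) (sq_nonneg (1 - w.1)),
        mul_nonneg (mul_nonneg (by linarith : (0:ℝ) ≤ 1 - q) (by linarith : (0:ℝ) ≤ 1 - p)) (sq_nonneg (1 - w.1 - w.2)),
        mul_nonneg (mul_nonneg (by linarith : (0:ℝ) ≤ 1 - q) (le_of_lt hp0)) (sq_nonneg (1 - w.2))]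
    have := mul_pos hq0 hp0
    linarith
  · apply le_antisymm
    · apply csInf_le
      · exact ⟨0, by rintro x ⟨w, -, rfl⟩; dsimp only; nlinarith [sq_nonneg (1 - w.1 - w.2), sq_nonneg (1 - w.2)]⟩
      · exact ⟨((0:ℝ), (1:ℝ)), Set.mem_univ _, by norm_num⟩
    · refine le_csInf ⟨_, ⟨((0:ℝ), (1:ℝ)), Set.mem_univ _, rfl⟩⟩ ?_
      rintro x ⟨w, -, rfl⟩
      dsimp only
      nlinarith [sq_nonneg (1 - w.1 - w.2), sq_nonneg (1 - w.2)]
end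

section
/- Let g : [0,1] → ℝ be defined by g(q) = min over (w₁,w₂) ∈ ℝ² of q·(p + (1-p)(1-w₁)²) + (1-q)·((1-p)(1-w₁-w₂)² + p(1-w₂)²), for fixed p ∈ (0,1). Then g is monotone nondecreasing on [0,1] and g(1) = p. -/
/-!
Multiplied by `D = p + q (1 - p)`, the loss at `w` equals `p q` plus two nonnegative squares
(weighted by `1 - q` and `1 - p`), and both squares vanish at an explicit `w`. Hence
`g q = p q / D`, which is nondecreasing in `q` and equals `p` at `q = 1`.
-/

noncomputable section

def linearFitLoss (p q : ℝ) (w : ℝ × ℝ) : ℝ :=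
  q * (p + (1 - p) * (1 - w.1)^2) + (1 - q) * ((1 - p) * (1 - w.1 - w.2)^2 + p * (1 - w.2)^2)

def optimalLoss (p q : ℝ) : ℝ := p * q / (p + q * (1 - p))

lemma optimalLoss_denom_pos {p q : ℝ} (hp0 : 0 < p) (hp1 : p ≤ 1) (hq : 0 ≤ q) :
    0 < p + q * (1 - p) :=
  add_pos_of_pos_of_nonneg hp0 (mul_nonneg hq (sub_nonneg.2 hp1))

lemma mul_linearFitLoss_sub_eq (p q : ℝ) (w : ℝ × ℝ) :
    (p + q * (1 - p)) * linearFitLoss p q w - p * q =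
      (1 - q) * (p + q * (1 - p)) * ((1 - w.2) - (1 - p) * w.1)^2 +
        (1 - p) * ((p + q * (1 - p)) * (1 - w.1) - (1 - q) * p)^2 := by
  unfold linearFitLoss
  ring

lemma isLeast_linearFitLoss {p q : ℝ} (hp0 : 0 < p) (hp1 : p ≤ 1) (hq0 : 0 ≤ q) (hq1 : q ≤ 1) :
    IsLeast (Set.range (linearFitLoss p q)) (optimalLoss p q) := by
  have hD := optimalLoss_denom_pos hp0 hp1 hq0
  refine ⟨⟨(1 - (1 - q) * p / (p + q * (1 - p)), 1 - q * (1 - p) / (p + q * (1 - p))), ?_⟩, ?_⟩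
  · unfold linearFitLoss optimalLoss
    field_simp
    ring
  · rintro _ ⟨w, rfl⟩
    rw [optimalLoss, div_le_iff₀ hD, mul_comm]
    linarith [mul_linearFitLoss_sub_eq p q w,
      mul_nonneg (mul_nonneg (sub_nonneg.2 hq1) hD.le) (sq_nonneg ((1 - w.2) - (1 - p) * w.1)),
      mul_nonneg (sub_nonneg.2 hp1)
        (sq_nonneg ((p + q * (1 - p)) * (1 - w.1) - (1 - q) * p))]

lemma sInf_linearFitLoss {p q : ℝ} (hp0 : 0 < p) (hp1 : p ≤ 1) (hq0 : 0 ≤ q) (hq1 : q ≤ 1) :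
    sInf (linearFitLoss p q '' Set.univ) = optimalLoss p q := by
  rw [Set.image_univ]
  exact (isLeast_linearFitLoss hp0 hp1 hq0 hq1).csInf_eq

lemma monotoneOn_optimalLoss {p : ℝ} (hp0 : 0 < p) (hp1 : p ≤ 1) :
    MonotoneOn (optimalLoss p) (Set.Ici 0) := by
  intro a ha b hb hab
  rw [optimalLoss, optimalLoss, div_le_div_iff₀ (optimalLoss_denom_pos hp0 hp1 ha)
    (optimalLoss_denom_pos hp0 hp1 hb)]
  have hcross : p * b * (p + a * (1 - p)) - p * a * (p + b * (1 - p)) = p ^ 2 * (b - a) := by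
    ring
  linarith [mul_nonneg (sq_nonneg p) (sub_nonneg.2 hab)]

lemma optimalLoss_one (p : ℝ) : optimalLoss p 1 = p := by
  simp [optimalLoss]

end

theorem stmt_12 (p : ℝ) (hp : p ∈ Set.Ioo (0:ℝ) 1) :
    MonotoneOn (fun q : ℝ => sInf ((fun w : ℝ × ℝ =>
        q * (p + (1 - p) * (1 - w.1)^2) +
          (1 - q) * ((1 - p) * (1 - w.1 - w.2)^2 + p * (1 - w.2)^2)) '' Set.univ))
      (Set.Icc 0 1) ∧
    sInf ((fun w : ℝ × ℝ =>
        (1:ℝ) * (p + (1 - p) * (1 - w.1)^2) +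
          (1 - 1) * ((1 - p) * (1 - w.1 - w.2)^2 + p * (1 - w.2)^2)) '' Set.univ) = p := by
  obtain ⟨hp0, hp1⟩ := hp
  have hg : Set.EqOn (fun q => sInf (linearFitLoss p q '' Set.univ)) (optimalLoss p)
      (Set.Icc 0 1) := fun q hq => sInf_linearFitLoss hp0 hp1.le hq.1 hq.2
  refine ⟨?_, ?_⟩
  · exact ((monotoneOn_optimalLoss hp0 hp1.le).mono Set.Icc_subset_Ici_self).congr hg.symm
  · exact (sInf_linearFitLoss hp0 hp1.le zero_le_one le_rfl).trans (optimalLoss_one p)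
end
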